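/- Propagation of maxima along active neighbors: Let G be a finite weighted directed graph with nonempty boundary ∂V. Suppose F(u)(x) = w₊(x)‖∇u(x)‖⁺ + H(u)(x) for interior x, where w₊(x) > 0 for all interior x and H is an elliptic PDE on G. Let u, v : V → ℝ satisfy F(u)(x) ≥ F(v)(x) for all interior x, set M = max_{x∈V}(u(x) − v(x)) and W = {x ∈ V : u(x) − v(x) = M}, and suppose M > 0. Then for every interior vertex x ∈ W and every active neighbor z of x (for u), one has z ∈ W. -/

import Mathlib

/-!
At a maximum point `x` of `u - v` every difference quotient of `u` is at most the corresponding
one of `v`, and `u x > v x`. Ellipticity then gives `H u x ≤ H v x`, so the comparison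
`F v x ≤ F u x` with `w₊ x > 0` yields `‖∇v(x)‖⁺ ≤ ‖∇u(x)‖⁺`. Along an active neighbor `z` of `u`
the quotient of `v` is therefore no larger than that of `u`, hence they coincide and `u - v`
takes the same value at `z` as at `x`.
-/

/-- The positive eikonal operator `‖∇u(x)‖⁺` on a weighted directed graph. -/
noncomputable def eikP {V : Type*} (adj : V → V → Prop) (w : V → V → ℝ)
    (u : V → ℝ) (x : V) : ℝ :=
  sSup (Set.range fun y : {y : V // adj x y} => w x y.1 * (u y.1 - u x))

namespace WeightedGraph

variable {V : Type*} (adj : V → V → Prop) (w : V → V → ℝ)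

/-- The gradient `∇u(x)`, indexed by the neighbors of `x`. -/
def grad (u : V → ℝ) (x : V) : {y : V // adj x y} → ℝ :=
  fun y => w x y.1 * (u y.1 - u x)

variable {adj w} {u v : V → ℝ} {x : V}

theorem grad_le_grad_of_sub_le (hw : ∀ y, adj x y → 0 ≤ w x y)
    (hmax : ∀ y, u y - v y ≤ u x - v x) : grad adj w u x ≤ grad adj w v x := fun y =>
  mul_le_mul_of_nonneg_left (by linarith [hmax y.1]) (hw y.1 y.2)

variable [Finite V]

theorem grad_le_eikP (u : V → ℝ) (y : {y : V // adj x y}) :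
    grad adj w u x y ≤ eikP adj w u x :=
  le_csSup (Set.finite_range _).bddAbove ⟨y, rfl⟩

theorem sub_eq_sub_of_active {z : V} (hz : adj x z) (hwz : 0 < w x z)
    (hgrad : grad adj w u x ≤ grad adj w v x) (heik : eikP adj w v x ≤ eikP adj w u x)
    (hact : w x z * (u z - u x) = eikP adj w u x) : u z - u x = v z - v x := by
  have hvu : w x z * (v z - v x) ≤ w x z * (u z - u x) :=
    (grad_le_eikP v ⟨z, hz⟩).trans (heik.trans hact.ge)
  exact le_antisymm (le_of_mul_le_mul_left (hgrad ⟨z, hz⟩) hwz) (le_of_mul_le_mul_left hvu hwz)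

end WeightedGraph

open WeightedGraph

theorem propagation_of_maxima_general
    {V : Type*} [Fintype V]
    (adj : V → V → Prop) (w : V → V → ℝ) (B : Set V)
    (hw : ∀ x y : V, adj x y → 0 < w x y)
    (h : (x : V) → ℝ → ({y : V // adj x y} → ℝ) → ℝ)
    (H : (V → ℝ) → V → ℝ)
    (hHint : ∀ (u : V → ℝ) (x : V), x ∉ B →
      H u x = h x (u x) (fun y => w x y.1 * (u y.1 - u x)))
    (hHell : ∀ x : V, x ∉ B → ∀ (r s : ℝ) (p q : {y : V // adj x y} → ℝ),
      s ≤ r → p ≤ q → h x r p ≤ h x s q)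
    (wp : V → ℝ) (hwp : ∀ x : V, x ∉ B → 0 < wp x)
    (F : (V → ℝ) → V → ℝ)
    (hF : ∀ (u : V → ℝ) (x : V), x ∉ B →
      F u x = wp x * eikP adj w u x + H u x)
    (u v : V → ℝ)
    (hcomp : ∀ x : V, x ∉ B → F v x ≤ F u x)
    (M : ℝ) (hM : IsGreatest (Set.range fun x : V => u x - v x) M)
    (hMpos : 0 < M)
    (x : V) (hx : x ∉ B) (hxW : u x - v x = M)
    (z : V) (hz : adj x z)
    (hact : w x z * (u z - u x) = eikP adj w u x) :
    u z - v z = M := by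
  have hmax : ∀ y, u y - v y ≤ u x - v x := fun y => hxW ▸ hM.2 ⟨y, rfl⟩
  have hgrad : grad adj w u x ≤ grad adj w v x :=
    grad_le_grad_of_sub_le (fun y hy => (hw x y hy).le) hmax
  have hH : H u x ≤ H v x := by
    rw [hHint u x hx, hHint v x hx]
    exact hHell x hx _ _ _ _ (by linarith) hgrad
  have heik : eikP adj w v x ≤ eikP adj w u x := by
    have hFx := hcomp x hx
    rw [hF u x hx, hF v x hx] at hFx
    exact le_of_mul_le_mul_left (by linarith) (hwp x hx)
  linarith [sub_eq_sub_of_active hz (hw x z hz) hgrad heik hact]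

theorem propagation_of_maxima
    {V : Type*} [Fintype V]
    (adj : V → V → Prop) (w : V → V → ℝ) (B : Set V)
    (hB : B.Nonempty)
    (hne : ∀ x y : V, adj x y → x ≠ y)
    (hw : ∀ x y : V, adj x y → 0 < w x y)
    (hdeg : ∀ x : V, x ∉ B → ∃ y : V, adj x y)
    (h : (x : V) → ℝ → ({y : V // adj x y} → ℝ) → ℝ)
    (g : V → ℝ)
    (H : (V → ℝ) → V → ℝ)
    (hHint : ∀ (u : V → ℝ) (x : V), x ∉ B →
      H u x = h x (u x) (fun y => w x y.1 * (u y.1 - u x)))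
    (hHbd : ∀ (u : V → ℝ) (x : V), x ∈ B → H u x = g x - u x)
    (hHell : ∀ x : V, x ∉ B → ∀ (r s : ℝ) (p q : {y : V // adj x y} → ℝ),
      s ≤ r → p ≤ q → h x r p ≤ h x s q)
    (wp : V → ℝ) (hwp : ∀ x : V, x ∉ B → 0 < wp x)
    (F : (V → ℝ) → V → ℝ)
    (hF : ∀ (u : V → ℝ) (x : V), x ∉ B →
      F u x = wp x * eikP adj w u x + H u x)
    (u v : V → ℝ)
    (hcomp : ∀ x : V, x ∉ B → F v x ≤ F u x)
    (M : ℝ) (hM : IsGreatest (Set.range fun x : V => u x - v x) M)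
    (hMpos : 0 < M)
    (x : V) (hx : x ∉ B) (hxW : u x - v x = M)
    (z : V) (hz : adj x z)
    (hact : w x z * (u z - u x) = eikP adj w u x) :
    u z - v z = M :=
  propagation_of_maxima_general adj w B hw h H hHint hHell wp hwp F hF u v hcomp M hM hMpos x hx hxW
    z hz hact
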